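/- arXiv:math/0610315 — 3 statements merged into one kernel-verified Lean document; each statement's English description precedes it below -/
import Mathlib

section
/- (Invariance of symmetric roots under isomorphisms.) Let A, B, C, D ∈ K with AD − BC ≠ 0 and Cα_m + D ≠ 0 for all m, and set α'_m := (Aα_m + B)/(Cα_m + D) for m = 1, …, 2g+2. Then the α'_m are pairwise distinct, and for all pairwise distinct indices i, j, k, any symmetric ratio p for (i,j) computed from the α's, and any symmetric ratio p' for (i,j) computed from the α''s, the associated symmetric roots satisfy (ℓ'_{ijk})^{4g} = (ℓ_{ijk})^{4g}; that is, the symmetric roots of a hyperelliptic curve are invariant, up to 4g-th roots of unity, under a common Möbius transformation of the roots of the defining polynomial. -/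
/-!
Write `u x = c x + e` and `Δ = a e - b c`. The Möbius map scales differences:
`x' - y' = Δ (x - y) / (u x * u y)`. Hence `(α'ᵢ - α'ₖ) / (α'ⱼ - α'ₖ)` is the old quotient times
`u αⱼ / u αᵢ`, while in `d'ⱼ / d'ᵢ` the powers of `Δ` and the full product `∏ₙ u αₙ` cancel,
leaving `(dⱼ / dᵢ) (u αᵢ / u αⱼ)^{2g}`. So `p'^{4g} = (p u αᵢ / u αⱼ)^{4g}`, and the two factors
cancel in `ℓ'^{4g}`.
-/

open Finset

section Moebius

variable {K : Type*} [Field K] {a b c e : K}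

theorem moebius_sub_moebius {x y : K} (hx : c * x + e ≠ 0) (hy : c * y + e ≠ 0) :
    (a * x + b) / (c * x + e) - (a * y + b) / (c * y + e) =
      (a * e - b * c) * (x - y) / ((c * x + e) * (c * y + e)) := by
  rw [div_sub_div _ _ hx hy]
  ring

theorem moebius_injective {ι : Type*} {x : ι → K} (hx : Function.Injective x)
    (hdet : a * e - b * c ≠ 0) (hden : ∀ m, c * x m + e ≠ 0) :
    Function.Injective fun m ↦ (a * x m + b) / (c * x m + e) := by
  intro m n h
  dsimp only at h
  have hsub := moebius_sub_moebius (a := a) (b := b) (hden m) (hden n)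
  rw [h, sub_self, eq_comm, div_eq_zero_iff] at hsub
  have hprod := hsub.resolve_right (mul_ne_zero (hden m) (hden n))
  exact hx (sub_eq_zero.mp ((mul_eq_zero.mp hprod).resolve_left hdet))

theorem moebius_sub_div_moebius_sub {x y z : K} (hdet : a * e - b * c ≠ 0)
    (hx : c * x + e ≠ 0) (hy : c * y + e ≠ 0) (hz : c * z + e ≠ 0) :
    ((a * x + b) / (c * x + e) - (a * z + b) / (c * z + e)) /
        ((a * y + b) / (c * y + e) - (a * z + b) / (c * z + e)) =
      (x - z) / (y - z) * ((c * y + e) / (c * x + e)) := by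
  rw [moebius_sub_moebius hx hz, moebius_sub_moebius hy hz]
  field_simp

theorem prod_moebius_sub {ι : Type*} (s : Finset ι) (x : ι → K) (m : ι)
    (hden : ∀ n, c * x n + e ≠ 0) :
    ∏ n ∈ s, ((a * x m + b) / (c * x m + e) - (a * x n + b) / (c * x n + e)) =
      (a * e - b * c) ^ #s * (∏ n ∈ s, (x m - x n)) /
        ((c * x m + e) ^ #s * ∏ n ∈ s, (c * x n + e)) := by
  simp_rw [moebius_sub_moebius (hden m) (hden _)]
  rw [prod_div_distrib, prod_mul_distrib, prod_mul_distrib, prod_const, prod_const]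

theorem prod_erase_moebius_sub_div {n : ℕ} (x : Fin (n + 2) → K) (hdet : a * e - b * c ≠ 0)
    (hden : ∀ m, c * x m + e ≠ 0) (i j : Fin (n + 2)) :
    (∏ m ∈ univ.erase j, ((a * x j + b) / (c * x j + e) - (a * x m + b) / (c * x m + e))) /
        ∏ m ∈ univ.erase i, ((a * x i + b) / (c * x i + e) - (a * x m + b) / (c * x m + e)) =
      (∏ m ∈ univ.erase j, (x j - x m)) / (∏ m ∈ univ.erase i, (x i - x m)) *
        ((c * x i + e) / (c * x j + e)) ^ n := by
  have hcard (m : Fin (n + 2)) : #(univ.erase m) = n + 1 := by simp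
  have hQ (m : Fin (n + 2)) : ∏ l ∈ univ.erase m, (c * x l + e) ≠ 0 :=
    prod_ne_zero_iff.mpr fun l _ ↦ hden l
  have hsplit : (c * x i + e) * ∏ l ∈ univ.erase i, (c * x l + e) =
      (c * x j + e) * ∏ l ∈ univ.erase j, (c * x l + e) := by
    rw [mul_prod_erase _ (fun l ↦ c * x l + e) (mem_univ i),
      mul_prod_erase _ (fun l ↦ c * x l + e) (mem_univ j)]
  rw [prod_moebius_sub _ _ j hden, prod_moebius_sub _ _ i hden, hcard, hcard, div_pow]
  field_simp [hden i, hden j, hQ i, hQ j]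
  congr 1
  linear_combination
    (∏ m ∈ univ.erase j, (x j - x m)) * (c * x i + e) ^ n * (c * x j + e) ^ n * hsplit

end Moebius

theorem symmetric_roots_moebius_invariance_general
    (g : ℕ) (K : Type*) [Field K]
    (α : Fin (2*g+2) → K) (hα : Function.Injective α)
    (a b c e : K) (hdet : a*e - b*c ≠ 0) (hden : ∀ m, c * α m + e ≠ 0)
    (α' : Fin (2*g+2) → K)
    (hα' : ∀ m, α' m = (a * α m + b) / (c * α m + e))
    (d : Fin (2*g+2) → K)
    (hd : ∀ m, d m = ∏ n ∈ univ.erase m, (α m - α n))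
    (d' : Fin (2*g+2) → K)
    (hd' : ∀ m, d' m = ∏ n ∈ univ.erase m, (α' m - α' n)) :
    Function.Injective α' ∧
    ∀ i j k : Fin (2*g+2), i ≠ j → i ≠ k → j ≠ k →
      ∀ p : K, p ^ (4*g) = (d j / d i) ^ 2 →
        ∀ p' : K, p' ^ (4*g) = (d' j / d' i) ^ 2 →
          (p' * (α' i - α' k) / (α' j - α' k)) ^ (4*g) =
            (p * (α i - α k) / (α j - α k)) ^ (4*g) := by
  obtain rfl : α' = fun m ↦ (a * α m + b) / (c * α m + e) := funext hα'
  refine ⟨moebius_injective hα hdet hden, fun i j k _ _ _ p hp p' hp' ↦ ?_⟩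
  have hratio : d' j / d' i = d j / d i * ((c * α i + e) / (c * α j + e)) ^ (2 * g) := by
    rw [hd, hd, hd', hd']
    exact prod_erase_moebius_sub_div α hdet hden i j
  have hp'p : p' ^ (4 * g) = (p * ((c * α i + e) / (c * α j + e))) ^ (4 * g) := by
    rw [hp', hratio, mul_pow p, hp]
    ring
  have hcancel : (c * α i + e) / (c * α j + e) * ((c * α j + e) / (c * α i + e)) = 1 := by
    rw [div_mul_div_cancel₀ (hden j), div_self (hden i)]
  calc (p' * ((a * α i + b) / (c * α i + e) - (a * α k + b) / (c * α k + e)) /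
          ((a * α j + b) / (c * α j + e) - (a * α k + b) / (c * α k + e))) ^ (4 * g)
      = (p' * ((c * α j + e) / (c * α i + e))) ^ (4 * g) *
          ((α i - α k) / (α j - α k)) ^ (4 * g) := by
        rw [mul_div_assoc, moebius_sub_div_moebius_sub hdet (hden i) (hden j) (hden k),
          mul_comm _ (_ / _), ← mul_assoc, mul_pow]
    _ = (p * ((c * α i + e) / (c * α j + e) * ((c * α j + e) / (c * α i + e)))) ^ (4 * g) *
          ((α i - α k) / (α j - α k)) ^ (4 * g) := by
        rw [mul_pow p', hp'p, ← mul_pow, mul_assoc]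
    _ = (p * (α i - α k) / (α j - α k)) ^ (4 * g) := by
        rw [hcancel, mul_one, ← mul_pow, mul_div_assoc]

/-- (Invariance of symmetric roots under isomorphisms.) If
`α' m = (a·α m + b)/(c·α m + e)` is a common Möbius transformation (with `a·e − b·c ≠ 0`
and all denominators nonzero) of the roots `α m`, then the `α' m` are pairwise distinct,
and for all pairwise distinct `i, j, k`, any symmetric ratio `p` for `(i,j)` computed from
the `α`'s and any symmetric ratio `p'` for `(i,j)` computed from the `α'`'s, the associated
symmetric roots satisfy `(ℓ'_{ijk})^{4g} = (ℓ_{ijk})^{4g}`. -/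
theorem symmetric_roots_moebius_invariance
    (g : ℕ) (hg : 1 ≤ g) (K : Type*) [Field K]
    (α : Fin (2*g+2) → K) (hα : Function.Injective α)
    (a b c e : K) (hdet : a*e - b*c ≠ 0) (hden : ∀ m, c * α m + e ≠ 0)
    (α' : Fin (2*g+2) → K)
    (hα' : ∀ m, α' m = (a * α m + b) / (c * α m + e))
    (d : Fin (2*g+2) → K)
    (hd : ∀ m, d m = ∏ n ∈ univ.erase m, (α m - α n))
    (d' : Fin (2*g+2) → K)
    (hd' : ∀ m, d' m = ∏ n ∈ univ.erase m, (α' m - α' n)) :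
    Function.Injective α' ∧
    ∀ i j k : Fin (2*g+2), i ≠ j → i ≠ k → j ≠ k →
      ∀ p : K, p ^ (4*g) = (d j / d i) ^ 2 →
        ∀ p' : K, p' ^ (4*g) = (d' j / d' i) ^ 2 →
          (p' * (α' i - α' k) / (α' j - α' k)) ^ (4*g) =
            (p * (α i - α k) / (α j - α k)) ^ (4*g) :=
  symmetric_roots_moebius_invariance_general g K α hα a b c e hdet hden α' hα' d hd d' hd'
end

section
/- (Invariance of the symmetric discriminant under isomorphisms.) Let A, B, C, D ∈ K with AD − BC ≠ 0 and Cα_m + D ≠ 0 for all m, and set α'_m := (Aα_m + B)/(Cα_m + D) for m = 1, …, 2g+2. Then for all distinct indices i, j one has the exact equality (α'_i − α'_j)^{2g(2g+1)} · Δ(f') / ( f'_{new}(α'_i) · f'_{new}(α'_j) )^{2g+1} = (α_i − α_j)^{2g(2g+1)} · Δ(f) / ( f'(α_i) · f'(α_j) )^{2g+1}, where Δ(f') = ∏_{r<s}(α'_r − α'_s)². In particular the squared symmetric discriminants are invariant: (D'_{ij})² = (D_{ij})². -/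
open Finset

/-!
A Möbius map `x ↦ (a x + b) / (c x + e)` rescales differences of points:
`(α' r - α' s) (u r) (u s) = δ (α r - α s)` with `δ = a e - b c` and `u = c α + e`.
Hence `f'(α' k)` and `Δ(f')` differ from `f'(α k)` and `Δ(f)` by explicit powers of `δ`, `u k`
and `∏ u`, and these cancel in `(α i - α j) ^ (m (m + 1)) Δ / (f'(α i) f'(α j)) ^ (m + 1)`,
where `m + 2 = 2g + 2` is the number of roots.

The symmetric roots obey the same rule, with `δ = p (α i - α j)` and `u k = α j - α k`, and
`ℓ i = 0`; so `D_{ij}` is the discriminant of the points `ℓ k`, `k ≠ j`, and the rule gives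
`D_{ij} f'(α j) ^ (2 (m + 1)) = (p (α i - α j)) ^ (m (m + 1)) Δ(f)`. Squaring brings in
`p ^ (2m (m + 1)) = (f'(α j) / f'(α i)) ^ (2 (m + 1))`, which is all that is known about `p`.
-/

section
variable {ι K : Type*} [Field K]

theorem moebius_sub_moebius_mul {a b c e x y : K} (hx : c * x + e ≠ 0) (hy : c * y + e ≠ 0) :
    ((a * x + b) / (c * x + e) - (a * y + b) / (c * y + e)) * ((c * x + e) * (c * y + e)) =
      (a * e - b * c) * (x - y) := by
  rw [div_sub_div _ _ hx hy, div_mul_cancel₀ _ (mul_ne_zero hx hy)]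
  ring

def discrOn [LinearOrder ι] (α : ι → K) (S : Finset ι) : K :=
  ∏ r ∈ S, ∏ s ∈ S.filter (fun s => r < s), (α r - α s) ^ 2

theorem discrOn_insert [LinearOrder ι] (α : ι → K) {a : ι} {S : Finset ι} (ha : a ∉ S) :
    discrOn α (insert a S) = (∏ s ∈ S, (α a - α s)) ^ 2 * discrOn α S := by
  have hrow : ∀ r ∈ S, ∏ s ∈ (insert a S).filter (fun s => r < s), (α r - α s) ^ 2 =
      (if r < a then (α a - α r) ^ 2 else 1) *
        ∏ s ∈ S.filter (fun s => r < s), (α r - α s) ^ 2 := by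
    intro r _
    rw [filter_insert]
    split_ifs
    · rw [prod_insert (by simp [ha]), sub_sq_comm]
    · rw [one_mul]
  have hsplit : S.filter (fun s => ¬ a < s) = S.filter (fun s => s < a) :=
    filter_congr fun s hs => by
      rw [not_lt, le_iff_lt_or_eq, or_iff_left (ne_of_mem_of_not_mem hs ha)]
  rw [discrOn, prod_insert ha, filter_insert, if_neg (lt_irrefl a), prod_congr rfl hrow,
    prod_mul_distrib, ← prod_filter, ← mul_assoc, ← prod_pow, ← hsplit,
    prod_filter_mul_prod_filter_not, discrOn]

/-- `f'(α k)` for `f = ∏ s, (X - α s)`. -/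
def derivAtRoot [Fintype ι] [DecidableEq ι] (α : ι → K) (k : ι) : K :=
  ∏ s ∈ univ.erase k, (α k - α s)

theorem derivAtRoot_ne_zero [Fintype ι] [DecidableEq ι] {α : ι → K}
    (hα : Function.Injective α) (k : ι) : derivAtRoot α k ≠ 0 :=
  prod_ne_zero_iff.mpr fun _ hs => sub_ne_zero.mpr (hα.ne (ne_of_mem_erase hs).symm)

variable {α β u : ι → K} {δ : K}

theorem injective_of_sub_mul (hδ : δ ≠ 0) (hα : Function.Injective α)
    (h : ∀ r s, (β r - β s) * (u r * u s) = δ * (α r - α s)) : Function.Injective β := by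
  intro r s hrs
  have := h r s
  rw [hrs, sub_self, zero_mul, eq_comm, mul_eq_zero, or_iff_right hδ, sub_eq_zero] at this
  exact hα this

theorem prod_sub_mul_eq_pow_card_mul (T : Finset ι) (a : ι)
    (h : ∀ s ∈ T, (β a - β s) * (u a * u s) = δ * (α a - α s)) :
    (∏ s ∈ T, (β a - β s)) * (u a ^ #T * ∏ s ∈ T, u s) =
      δ ^ #T * ∏ s ∈ T, (α a - α s) := by
  rw [← prod_const, ← prod_const, ← prod_mul_distrib, ← prod_mul_distrib,
    ← prod_mul_distrib]
  exact prod_congr rfl h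

theorem discrOn_mul_prod_pow [LinearOrder ι] (S : Finset ι)
    (h : ∀ r ∈ S, ∀ s ∈ S, (β r - β s) * (u r * u s) = δ * (α r - α s)) :
    discrOn β S * (∏ r ∈ S, u r) ^ (2 * (#S - 1)) = δ ^ (#S * (#S - 1)) * discrOn α S := by
  induction S using Finset.induction_on with
  | empty => simp [discrOn]
  | insert a T ha ih =>
    obtain rfl | hT := T.eq_empty_or_nonempty
    · rw [discrOn_insert β ha, discrOn_insert α ha]
      simp [discrOn]
    obtain ⟨t, ht⟩ : ∃ t, #T = t + 1 := ⟨#T - 1, by have := hT.card_pos; omega⟩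
    have hrow := prod_sub_mul_eq_pow_card_mul T a fun s hs =>
      h a (mem_insert_self a T) s (mem_insert_of_mem hs)
    have ih := ih fun r hr s hs => h r (mem_insert_of_mem hr) s (mem_insert_of_mem hs)
    rw [ht, Nat.add_sub_cancel] at ih
    rw [ht] at hrow
    rw [discrOn_insert β ha, discrOn_insert α ha, prod_insert ha, card_insert_of_notMem ha, ht,
      Nat.add_sub_cancel]
    linear_combination ((∏ s ∈ T, (β a - β s)) * (u a ^ (t + 1) * ∏ s ∈ T, u s) +
          δ ^ (t + 1) * ∏ s ∈ T, (α a - α s)) *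
        (discrOn β T * (∏ s ∈ T, u s) ^ (2 * t)) * hrow +
      δ ^ (2 * (t + 1)) * (∏ s ∈ T, (α a - α s)) ^ 2 * ih

end

section
variable {K : Type*} [Field K] {m : ℕ}

def normalizedDiscr (α : Fin (m + 2) → K) (i j : Fin (m + 2)) : K :=
  (α i - α j) ^ (m * (m + 1)) * discrOn α univ / (derivAtRoot α i * derivAtRoot α j) ^ (m + 1)

def symmetricDiscr (ℓ : Fin (m + 2) → K) (i j : Fin (m + 2)) : K :=
  (∏ k ∈ univ \ {i, j}, ℓ k) ^ 2 * discrOn ℓ (univ \ {i, j})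

variable {α β u : Fin (m + 2) → K} {δ : K}

theorem derivAtRoot_mul_pow_mul_prod (h : ∀ r s, (β r - β s) * (u r * u s) = δ * (α r - α s))
    (k : Fin (m + 2)) :
    derivAtRoot β k * (u k ^ m * ∏ r, u r) = δ ^ (m + 1) * derivAtRoot α k := by
  have hcard : #(univ.erase k) = m + 1 := by simp
  have := prod_sub_mul_eq_pow_card_mul (univ.erase k) k fun s _ => h k s
  rwa [hcard, pow_succ, mul_assoc, mul_prod_erase univ u (mem_univ k)] at this

theorem discrOn_univ_mul_prod_pow (h : ∀ r s, (β r - β s) * (u r * u s) = δ * (α r - α s)) :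
    discrOn β univ * (∏ r, u r) ^ (2 * (m + 1)) =
      δ ^ ((m + 2) * (m + 1)) * discrOn α univ := by
  simpa using discrOn_mul_prod_pow univ fun r _ s _ => h r s

theorem normalizedDiscr_eq_of_sub_mul (hδ : δ ≠ 0) (hu : ∀ r, u r ≠ 0)
    (h : ∀ r s, (β r - β s) * (u r * u s) = δ * (α r - α s)) (i j : Fin (m + 2)) :
    normalizedDiscr β i j = normalizedDiscr α i j := by
  set Q := ∏ r, u r
  have hW : (u i * u j) ^ (m * (m + 1)) * Q ^ (2 * (m + 1)) ≠ 0 :=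
    mul_ne_zero (pow_ne_zero _ (mul_ne_zero (hu i) (hu j)))
      (pow_ne_zero _ (prod_ne_zero_iff.mpr fun r _ => hu r))
  have hnum : (β i - β j) ^ (m * (m + 1)) * discrOn β univ *
        ((u i * u j) ^ (m * (m + 1)) * Q ^ (2 * (m + 1))) =
      δ ^ (2 * (m + 1) ^ 2) * ((α i - α j) ^ (m * (m + 1)) * discrOn α univ) :=
    calc _ = ((β i - β j) * (u i * u j)) ^ (m * (m + 1)) *
          (discrOn β univ * Q ^ (2 * (m + 1))) := by simp only [mul_pow]; ring
      _ = (δ * (α i - α j)) ^ (m * (m + 1)) *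
          (δ ^ ((m + 2) * (m + 1)) * discrOn α univ) := by
        rw [h, discrOn_univ_mul_prod_pow h]
      _ = _ := by simp only [mul_pow]; ring
  have hden : (derivAtRoot β i * derivAtRoot β j) ^ (m + 1) *
        ((u i * u j) ^ (m * (m + 1)) * Q ^ (2 * (m + 1))) =
      δ ^ (2 * (m + 1) ^ 2) * (derivAtRoot α i * derivAtRoot α j) ^ (m + 1) :=
    calc _ = (derivAtRoot β i * (u i ^ m * Q)) ^ (m + 1) *
          (derivAtRoot β j * (u j ^ m * Q)) ^ (m + 1) := by ring
      _ = (δ ^ (m + 1) * derivAtRoot α i) ^ (m + 1) *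
          (δ ^ (m + 1) * derivAtRoot α j) ^ (m + 1) := by
        rw [derivAtRoot_mul_pow_mul_prod h, derivAtRoot_mul_pow_mul_prod h]
      _ = _ := by ring
  rw [normalizedDiscr, ← mul_div_mul_right _ _ hW, hnum, hden,
    mul_div_mul_left _ _ (pow_ne_zero _ hδ), normalizedDiscr]

theorem symmetricDiscr_eq_discrOn_erase {ℓ : Fin (m + 2) → K} {i j : Fin (m + 2)}
    (hij : i ≠ j) (hℓi : ℓ i = 0) : symmetricDiscr ℓ i j = discrOn ℓ (univ.erase j) := by
  have herase : univ.erase j = insert i (univ \ {i, j}) := by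
    ext k
    rcases eq_or_ne k i with rfl | hki <;> simp [*]
  rw [herase, discrOn_insert ℓ (by simp), symmetricDiscr, hℓi]
  simp only [zero_sub, ← prod_pow, neg_sq]

theorem discrOn_univ_eq_sq_derivAtRoot_mul (α : Fin (m + 2) → K) (j : Fin (m + 2)) :
    discrOn α univ = derivAtRoot α j ^ 2 * discrOn α (univ.erase j) := by
  conv_lhs => rw [← insert_erase (mem_univ j)]
  rw [discrOn_insert α (notMem_erase j univ), derivAtRoot]

theorem sq_symmetricDiscr (hα : Function.Injective α) {i j : Fin (m + 2)} (hij : i ≠ j)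
    {p : K} (hp : p ^ (2 * m) = (derivAtRoot α j / derivAtRoot α i) ^ 2)
    {ℓ : Fin (m + 2) → K} (hℓ : ∀ k, ℓ k = p * (α i - α k) / (α j - α k)) :
    symmetricDiscr ℓ i j ^ 2 = normalizedDiscr α i j ^ 2 := by
  have hdi := derivAtRoot_ne_zero hα i
  have hdj := derivAtRoot_ne_zero hα j
  have hp' : p ^ (2 * m) * derivAtRoot α i ^ 2 = derivAtRoot α j ^ 2 := by
    rw [hp, div_pow, div_mul_cancel₀ _ (pow_ne_zero 2 hdi)]
  have hrel : ∀ r ∈ univ.erase j, ∀ s ∈ univ.erase j,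
      (ℓ r - ℓ s) * ((α j - α r) * (α j - α s)) = p * (α i - α j) * (α r - α s) := by
    intro r hr s hs
    have hr' := sub_ne_zero.mpr (hα.ne (ne_of_mem_erase hr).symm)
    have hs' := sub_ne_zero.mpr (hα.ne (ne_of_mem_erase hs).symm)
    rw [hℓ, hℓ]
    field_simp
    ring
  have hscale : discrOn ℓ (univ.erase j) * derivAtRoot α j ^ (2 * m) =
      (p * (α i - α j)) ^ ((m + 1) * m) * discrOn α (univ.erase j) := by
    simpa [derivAtRoot] using discrOn_mul_prod_pow _ hrel
  rw [symmetricDiscr_eq_discrOn_erase hij (by simp [hℓ]), normalizedDiscr, div_pow,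
    eq_div_iff (pow_ne_zero _ (pow_ne_zero _ (mul_ne_zero hdi hdj))),
    discrOn_univ_eq_sq_derivAtRoot_mul α j]
  apply mul_right_cancel₀ (pow_ne_zero (4 * m) hdj)
  calc _ = (discrOn ℓ (univ.erase j) * derivAtRoot α j ^ (2 * m)) ^ 2 *
        (derivAtRoot α i * derivAtRoot α j) ^ (2 * (m + 1)) := by ring
    _ = (p ^ (2 * m) * derivAtRoot α i ^ 2) ^ (m + 1) *
        ((α i - α j) ^ (m * (m + 1)) * discrOn α (univ.erase j)) ^ 2 *
        derivAtRoot α j ^ (2 * (m + 1)) := by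
      rw [hscale]; simp only [mul_pow]; ring
    _ = _ := by rw [hp']; ring

end

theorem symmetric_discriminant_moebius_invariance_general
    (g : ℕ) (K : Type*) [Field K]
    (α : Fin (2*g+2) → K) (hα : Function.Injective α)
    (a b c e : K) (hdet : a*e - b*c ≠ 0) (hden : ∀ m, c * α m + e ≠ 0)
    (α' : Fin (2*g+2) → K)
    (hα' : ∀ m, α' m = (a * α m + b) / (c * α m + e))
    (d : Fin (2*g+2) → K)
    (hd : ∀ m, d m = ∏ n ∈ univ.erase m, (α m - α n))
    (d' : Fin (2*g+2) → K)
    (hd' : ∀ m, d' m = ∏ n ∈ univ.erase m, (α' m - α' n))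
    (Δ : K)
    (hΔ : Δ = ∏ r : Fin (2*g+2), ∏ s ∈ univ.filter (fun s => r < s), (α r - α s) ^ 2)
    (Δ' : K)
    (hΔ' : Δ' = ∏ r : Fin (2*g+2), ∏ s ∈ univ.filter (fun s => r < s), (α' r - α' s) ^ 2)
    (i j : Fin (2*g+2)) (hij : i ≠ j)
    (p : K) (hp : p ^ (4*g) = (d j / d i) ^ 2)
    (ℓ : Fin (2*g+2) → K)
    (hℓ : ∀ k, ℓ k = p * (α i - α k) / (α j - α k))
    (p' : K) (hp' : p' ^ (4*g) = (d' j / d' i) ^ 2)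
    (ℓ' : Fin (2*g+2) → K)
    (hℓ' : ∀ k, ℓ' k = p' * (α' i - α' k) / (α' j - α' k))
    (D : K)
    (hD : D = (∏ k ∈ univ \ {i, j}, ℓ k) ^ 2 *
      ∏ k ∈ univ \ {i, j}, ∏ k' ∈ (univ \ {i, j}).filter (fun k' => k < k'),
        (ℓ k - ℓ k') ^ 2)
    (D' : K)
    (hD' : D' = (∏ k ∈ univ \ {i, j}, ℓ' k) ^ 2 *
      ∏ k ∈ univ \ {i, j}, ∏ k' ∈ (univ \ {i, j}).filter (fun k' => k < k'),
        (ℓ' k - ℓ' k') ^ 2) :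
    (α' i - α' j) ^ (2*g*(2*g+1)) * Δ' / (d' i * d' j) ^ (2*g+1) =
      (α i - α j) ^ (2*g*(2*g+1)) * Δ / (d i * d j) ^ (2*g+1) ∧
    D' ^ 2 = D ^ 2 := by
  obtain rfl : d = derivAtRoot α := funext hd
  obtain rfl : d' = derivAtRoot α' := funext hd'
  subst hΔ hΔ' hD hD'
  have hrel (r s : Fin (2*g+2)) :
      (α' r - α' s) * ((c * α r + e) * (c * α s + e)) = (a*e - b*c) * (α r - α s) := by
    rw [hα', hα', moebius_sub_moebius_mul (hden r) (hden s)]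
  have hinv : normalizedDiscr α' i j = normalizedDiscr α i j :=
    normalizedDiscr_eq_of_sub_mul hdet hden hrel i j
  rw [show 4 * g = 2 * (2 * g) by ring] at hp hp'
  refine ⟨hinv, ?_⟩
  calc _ = normalizedDiscr α' i j ^ 2 :=
        sq_symmetricDiscr (injective_of_sub_mul hdet hα hrel) hij hp' hℓ'
    _ = normalizedDiscr α i j ^ 2 := by rw [hinv]
    _ = _ := (sq_symmetricDiscr hα hij hp hℓ).symm

/-- (Invariance of the symmetric discriminant under isomorphisms.) If
`α' m = (a·α m + b)/(c·α m + e)` is a common Möbius transformation (with `a·e − b·c ≠ 0`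
and all denominators nonzero) of the roots, then for distinct `i, j` one has the exact
equality
`(α' i − α' j)^{2g(2g+1)}·Δ(f')/(f'ₙₑw(α' i)·f'ₙₑw(α' j))^{2g+1}
  = (α i − α j)^{2g(2g+1)}·Δ(f)/(f'(α i)·f'(α j))^{2g+1}`,
and in particular, for any symmetric ratios `p` (for the `α`'s) and `p'` (for the `α'`'s),
the squared symmetric discriminants are invariant: `(D'_{ij})² = (D_{ij})²`. -/
theorem symmetric_discriminant_moebius_invariance
    (g : ℕ) (hg : 1 ≤ g) (K : Type*) [Field K]
    (α : Fin (2*g+2) → K) (hα : Function.Injective α)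
    (a b c e : K) (hdet : a*e - b*c ≠ 0) (hden : ∀ m, c * α m + e ≠ 0)
    (α' : Fin (2*g+2) → K)
    (hα' : ∀ m, α' m = (a * α m + b) / (c * α m + e))
    (d : Fin (2*g+2) → K)
    (hd : ∀ m, d m = ∏ n ∈ univ.erase m, (α m - α n))
    (d' : Fin (2*g+2) → K)
    (hd' : ∀ m, d' m = ∏ n ∈ univ.erase m, (α' m - α' n))
    (Δ : K)
    (hΔ : Δ = ∏ r : Fin (2*g+2), ∏ s ∈ univ.filter (fun s => r < s), (α r - α s) ^ 2)
    (Δ' : K)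
    (hΔ' : Δ' = ∏ r : Fin (2*g+2), ∏ s ∈ univ.filter (fun s => r < s), (α' r - α' s) ^ 2)
    (i j : Fin (2*g+2)) (hij : i ≠ j)
    (p : K) (hp : p ^ (4*g) = (d j / d i) ^ 2)
    (ℓ : Fin (2*g+2) → K)
    (hℓ : ∀ k, ℓ k = p * (α i - α k) / (α j - α k))
    (p' : K) (hp' : p' ^ (4*g) = (d' j / d' i) ^ 2)
    (ℓ' : Fin (2*g+2) → K)
    (hℓ' : ∀ k, ℓ' k = p' * (α' i - α' k) / (α' j - α' k))
    (D : K)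
    (hD : D = (∏ k ∈ univ \ {i, j}, ℓ k) ^ 2 *
      ∏ k ∈ univ \ {i, j}, ∏ k' ∈ (univ \ {i, j}).filter (fun k' => k < k'),
        (ℓ k - ℓ k') ^ 2)
    (D' : K)
    (hD' : D' = (∏ k ∈ univ \ {i, j}, ℓ' k) ^ 2 *
      ∏ k ∈ univ \ {i, j}, ∏ k' ∈ (univ \ {i, j}).filter (fun k' => k < k'),
        (ℓ' k - ℓ' k') ^ 2) :
    (α' i - α' j) ^ (2*g*(2*g+1)) * Δ' / (d' i * d' j) ^ (2*g+1) =
      (α i - α j) ^ (2*g*(2*g+1)) * Δ / (d i * d j) ^ (2*g+1) ∧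
    D' ^ 2 = D ^ 2 :=
  symmetric_discriminant_moebius_invariance_general g K α hα a b c e hdet hden α' hα' d hd d' hd' Δ
    hΔ Δ' hΔ' i j hij p hp ℓ hℓ p' hp' ℓ' hℓ' D hD D' hD'
end

section
/- Let i ≠ j be indices in {1, …, 2g+2}, let p ∈ K satisfy p^{2g} = −f'(α_j)/f'(α_i), let ℓ_{ijk} be the associated symmetric roots, and let ℓ_{jik} := ℓ_{ijk}^{-1} be the symmetric roots for (j,i) associated to p^{-1}. Write X·∏_{k ≠ i,j}(X − ℓ_{ijk}) = X^{2g+1} + G_1 X^{2g} + ⋯ + G_{2g-1} X² + X. Then X·∏_{k ≠ i,j}(X − ℓ_{jik}) = X^{2g+1} + G_{2g-1} X^{2g} + ⋯ + G_1 X² + X; that is, the coefficient sequence of the symmetric model for (j,i) is the reversal of the coefficient sequence of the symmetric model for (i,j). -/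
/-!
By the normalization of `p`, the symmetric roots `ℓ_k` (`k ≠ i, j`) multiply to
`p^{2g} · ∏ (α_i - α_k) / ∏ (α_j - α_k) = 1`. Hence `R = ∏ (X - ℓ_k)`, of degree `2g`, has reversal
`X^{2g} R(1/X) = ∏ (1 - ℓ_k X) = ∏ (-ℓ_k) · ∏ (X - ℓ_k⁻¹) = ∏ (X - ℓ_k⁻¹)`, so the model for `(j, i)`
is `X` times the reversal of `R`, and its coefficients are those of `X · R` read backwards.
-/

open Finset Polynomial

namespace Polynomial

theorem reverse_prod {R ι : Type*} [CommSemiring R] [NoZeroDivisors R] (s : Finset ι)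
    (f : ι → R[X]) : (∏ k ∈ s, f k).reverse = ∏ k ∈ s, (f k).reverse := by
  induction s using Finset.cons_induction with
  | empty => simpa using reverse_C (1 : R)
  | cons a s _ ih => rw [prod_cons, prod_cons, reverse_mul_of_domain, ih]

theorem reverse_X_sub_C {R : Type*} [Ring R] (a : R) : (X - C a).reverse = 1 - C a * X := by
  nontriviality R
  have hX : (X : R[X]).reverse = 1 := by rw [← one_mul X, ← C_1, reverse_mul_X, reverse_C]
  rw [sub_eq_add_neg, ← C_neg, reverse_add_C, hX, natDegree_X, pow_one, C_neg, neg_mul,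
    ← sub_eq_add_neg]

theorem reverse_X_sub_C_of_ne_zero {K : Type*} [Field K] {a : K} (ha : a ≠ 0) :
    (X - C a).reverse = C (-a) * (X - C a⁻¹) := by
  rw [reverse_X_sub_C, mul_sub, ← C_mul, neg_mul, mul_inv_cancel₀ ha]
  simp only [C_neg, C_1]
  ring

theorem reverse_prod_X_sub_C {K ι : Type*} [Field K] {s : Finset ι} {ℓ : ι → K}
    (hℓ : ∀ k ∈ s, ℓ k ≠ 0) :
    (∏ k ∈ s, (X - C (ℓ k))).reverse = C (∏ k ∈ s, -ℓ k) * ∏ k ∈ s, (X - C (ℓ k)⁻¹) := by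
  rw [reverse_prod, prod_congr rfl fun k hk => reverse_X_sub_C_of_ne_zero (hℓ k hk),
    prod_mul_distrib, map_prod]

theorem coeff_X_mul_reverse {R : Type*} [Semiring R] (f : R[X]) {n : ℕ} (hn : 1 ≤ n)
    (hnf : n ≤ f.natDegree + 1) :
    (X * f.reverse).coeff n = (X * f).coeff (f.natDegree + 2 - n) := by
  obtain ⟨m, rfl⟩ : ∃ m, n = m + 1 := ⟨n - 1, by omega⟩
  rw [show f.natDegree + 2 - (m + 1) = f.natDegree - m + 1 by omega, coeff_X_mul, coeff_X_mul,
    coeff_reverse, revAt_le (by omega)]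

end Polynomial

theorem Finset.prod_erase_eq_mul_prod_sdiff_pair {ι M : Type*} [DecidableEq ι] [CommMonoid M]
    {s : Finset ι} {i j : ι} (hj : j ∈ s) (hij : i ≠ j) (f : ι → M) :
    ∏ n ∈ s.erase i, f n = f j * ∏ n ∈ s \ {i, j}, f n := by
  rw [sdiff_insert, sdiff_singleton_eq_erase, erase_right_comm,
    mul_prod_erase _ _ (mem_erase.2 ⟨hij.symm, hj⟩)]

section SymmetricRoots

variable {ι K : Type*} [Fintype ι] [DecidableEq ι] [Field K] {α : ι → K} {i j : ι}

theorem neg_div_prod_erase_sub (hij : α i ≠ α j) :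
    -((∏ n ∈ univ.erase j, (α j - α n)) / ∏ n ∈ univ.erase i, (α i - α n)) =
      (∏ k ∈ univ \ {i, j}, (α j - α k)) / ∏ k ∈ univ \ {i, j}, (α i - α k) := by
  have hne : i ≠ j := fun h => hij (congrArg α h)
  rw [prod_erase_eq_mul_prod_sdiff_pair (mem_univ j) hne,
    prod_erase_eq_mul_prod_sdiff_pair (mem_univ i) hne.symm, pair_comm,
    ← neg_sub (α i) (α j), neg_mul, neg_div, neg_neg,
    mul_div_mul_left _ _ (sub_ne_zero.2 hij)]

theorem prod_symmetricRoots_eq_one (hα : Function.Injective α) (hij : i ≠ j) {p : K}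
    (hp : p ^ #(univ \ {i, j}) =
      -((∏ n ∈ univ.erase j, (α j - α n)) / ∏ n ∈ univ.erase i, (α i - α n))) :
    ∏ k ∈ univ \ {i, j}, p * (α i - α k) / (α j - α k) = 1 := by
  have hsub : ∀ a, ∀ k ∈ univ \ {i, j}, k ≠ a → α a - α k ≠ 0 := fun a k _ hka =>
    sub_ne_zero.2 fun h => hka (hα h).symm
  have hA : ∏ k ∈ univ \ {i, j}, (α i - α k) ≠ 0 :=
    prod_ne_zero_iff.2 fun k hk => hsub i k hk (by simp_all)
  have hB : ∏ k ∈ univ \ {i, j}, (α j - α k) ≠ 0 :=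
    prod_ne_zero_iff.2 fun k hk => hsub j k hk (by simp_all)
  rw [prod_div_distrib, prod_mul_distrib, prod_const, hp, neg_div_prod_erase_sub (hα.ne hij)]
  field_simp

end SymmetricRoots

theorem symmetric_model_coefficient_reversal_general
    (g : ℕ) (K : Type*) [Field K]
    (α : Fin (2*g+2) → K) (hα : Function.Injective α)
    (d : Fin (2*g+2) → K)
    (hd : ∀ m, d m = ∏ n ∈ univ.erase m, (α m - α n))
    (i j : Fin (2*g+2)) (hij : i ≠ j)
    (p : K) (hp : p ^ (2*g) = -(d j / d i))
    (ℓ : Fin (2*g+2) → K)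
    (hℓ : ∀ k, ℓ k = p * (α i - α k) / (α j - α k))
    (P Q : Polynomial K)
    (hP : P = X * ∏ k ∈ univ \ {i, j}, (X - C (ℓ k)))
    (hQ : Q = X * ∏ k ∈ univ \ {i, j}, (X - C (ℓ k)⁻¹)) :
    ∀ n : ℕ, 1 ≤ n → n ≤ 2*g+1 → Q.coeff n = P.coeff (2*g+2-n) := by
  intro n hn1 hn2
  set s : Finset (Fin (2*g+2)) := univ \ {i, j}
  have hcard : #s = 2 * g := by simp [s, card_sdiff, card_pair hij]
  have hprod : ∏ k ∈ s, ℓ k = 1 := by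
    simp only [hℓ]
    exact prod_symmetricRoots_eq_one hα hij (by rw [hcard, hp, hd, hd])
  have hℓ0 : ∀ k ∈ s, ℓ k ≠ 0 := prod_ne_zero_iff.1 (hprod ▸ one_ne_zero)
  have hrev : (∏ k ∈ s, (X - C (ℓ k))).reverse = ∏ k ∈ s, (X - C (ℓ k)⁻¹) := by
    rw [reverse_prod_X_sub_C hℓ0, prod_neg, hprod, hcard, pow_mul, neg_one_sq]
    simp
  have hdeg : (∏ k ∈ s, (X - C (ℓ k))).natDegree = 2 * g := by
    rw [natDegree_finsetProd_X_sub_C_eq_card, hcard]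
  rw [hQ, hP, ← hrev, coeff_X_mul_reverse _ hn1 (by omega), hdeg]

/-- With the exact normalization `p^{2g} = −f'(α j)/f'(α i)`, the symmetric
model `Q` for `(j,i)` built from the inverse roots `ℓ_{jik} = ℓ_{ijk}⁻¹` has as coefficient
sequence the reversal of that of the symmetric model `P` for `(i,j)`:
`Q.coeff n = P.coeff (2g+2−n)` for `1 ≤ n ≤ 2g+1`. -/
theorem symmetric_model_coefficient_reversal
    (g : ℕ) (hg : 1 ≤ g) (K : Type*) [Field K]
    (α : Fin (2*g+2) → K) (hα : Function.Injective α)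
    (d : Fin (2*g+2) → K)
    (hd : ∀ m, d m = ∏ n ∈ univ.erase m, (α m - α n))
    (i j : Fin (2*g+2)) (hij : i ≠ j)
    (p : K) (hp : p ^ (2*g) = -(d j / d i))
    (ℓ : Fin (2*g+2) → K)
    (hℓ : ∀ k, ℓ k = p * (α i - α k) / (α j - α k))
    (P Q : Polynomial K)
    (hP : P = X * ∏ k ∈ univ \ {i, j}, (X - C (ℓ k)))
    (hQ : Q = X * ∏ k ∈ univ \ {i, j}, (X - C (ℓ k)⁻¹)) :
    ∀ n : ℕ, 1 ≤ n → n ≤ 2*g+1 → Q.coeff n = P.coeff (2*g+2-n) :=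
  symmetric_model_coefficient_reversal_general g K α hα d hd i j hij p hp ℓ hℓ P Q hP hQ
end
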